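/- (Translation invariance of d) Suppose the diagram of x_λ contains a small cap whose right vertex is labelled ∧ at position i with positions strictly inside the cap labelled only ∘ or ×, and let λ′ be obtained from λ by removing a box so that x_{λ′} is obtained from x_λ by replacing the labels at positions i−1, i of type (∘, ∧) by (∧, ∘) [Case (i) of Figure 7]. Then the induced bijection μ ↦ μ′ on the blocks satisfies d_{λ′μ′}(q) = d_{λμ}(q) for all μ in the block of λ. -/
import Mathlib


/-- The four labels `∘, ×, ∨, ∧` used in weight diagrams. -/
inductive Lbl : Type
  | circ  -- `∘`
  | times -- `×`
  | vee   -- `∨`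
  | wedge -- `∧`
  deriving DecidableEq

/-- Index set `ℤ ∖ {0}`. -/
def Zstar : Type := {i : ℤ // i ≠ 0}

/-- `A⁺`: elements with `⋯ > x_{−2} > x_{−1}` and `x_1 > x_2 > ⋯`. -/
def Aplus (x : Zstar → ℤ) : Prop :=
  ∀ i j : Zstar, i.1 < j.1 → (j.1 < 0 ∨ 0 < i.1) → x j < x i

/-- `I_∨(x) = {x_i : i < 0}`. -/
def Ivee (x : Zstar → ℤ) : Set ℤ := {v | ∃ i : Zstar, i.1 < 0 ∧ x i = v}

/-- `I_∧(x) = {x_i : i > 0}`. -/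
def Iwedge (x : Zstar → ℤ) : Set ℤ := {v | ∃ i : Zstar, 0 < i.1 ∧ x i = v}

open Classical in
/-- The diagram of `x ∈ A⁺`: vertex `n` is labelled `∘`, `×`, `∨` or `∧`
according to whether `n` lies in neither, both, only `I_∨`, or only `I_∧`. -/
noncomputable def diagram (x : Zstar → ℤ) : ℤ → Lbl := fun n =>
  if n ∈ Ivee x then (if n ∈ Iwedge x then Lbl.times else Lbl.vee)
  else (if n ∈ Iwedge x then Lbl.wedge else Lbl.circ)

/-- One covering move of the partial order on diagrams: `d' ` is obtained from
`d` by swapping a `∨` and a `∧` so that the `∧` moves to the right. -/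
def Step (d d' : ℤ → Lbl) : Prop :=
  ∃ i j : ℤ, i < j ∧ d i = Lbl.wedge ∧ d j = Lbl.vee ∧
    d' i = Lbl.vee ∧ d' j = Lbl.wedge ∧ ∀ n, n ≠ i → n ≠ j → d' n = d n

/-- Strict order generated by the swapping moves. -/
def DiagLt (d d' : ℤ → Lbl) : Prop := Relation.TransGen Step d d'

/-- Non-strict order generated by the swapping moves. -/
def DiagLe (d d' : ℤ → Lbl) : Prop := Relation.ReflTransGen Step d d'

/-- The weight `x_λ = λ̄ + ρ_δ` attached to a bipartition `(λL, λR)` (encoded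
as weakly decreasing eventually-zero sequences indexed from 0):
`x_{-k} = k - λ^L_k` and `x_k = λ^R_k + δ - k + 1` for `k ≥ 1`. -/
def xBipart (δ : ℤ) (lamL lamR : ℕ → ℕ) : Zstar → ℤ := fun i =>
  if 0 < i.1 then (lamR (i.1.toNat - 1) : ℤ) + (δ - i.1 + 1)
  else (-i.1) - (lamL ((-i.1).toNat - 1) : ℤ)

/-- A bipartition: both sequences weakly decreasing and eventually zero. -/
def IsBipartition (lamL lamR : ℕ → ℕ) : Prop :=
  Antitone lamL ∧ Antitone lamR ∧
    (∃ N, ∀ i, N ≤ i → lamL i = 0) ∧ (∃ N, ∀ i, N ≤ i → lamR i = 0)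

/-- A label is trivial if it is `∘` or `×`. -/
def Triv (s : Lbl) : Prop := s = Lbl.circ ∨ s = Lbl.times

/-- Boundary condition: labelled `∧` for `n ≪ 0` and `∨` for `n ≫ 0`. -/
def Bdd (d : ℤ → Lbl) : Prop :=
  ∃ N : ℤ, (∀ n : ℤ, n ≤ -N → d n = Lbl.wedge) ∧ (∀ n : ℤ, N ≤ n → d n = Lbl.vee)

/-- `n` is an endpoint of a cap in `C`. -/
def OnCap (C : Set (ℤ × ℤ)) (n : ℤ) : Prop := ∃ p ∈ C, p.1 = n ∨ p.2 = n

/-- `(i,j)` is a neighbouring `∨∧` pair relative to the existing caps `C`: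
`i < j`, `i` is labelled `∨`, `j` is labelled `∧`, neither is already on a
cap, and every vertex strictly between them is labelled `∘` or `×` or already
lies on a cap of `C`. -/
def ValidPair (d : ℤ → Lbl) (C : Set (ℤ × ℤ)) (i j : ℤ) : Prop :=
  i < j ∧ d i = Lbl.vee ∧ d j = Lbl.wedge ∧ ¬ OnCap C i ∧ ¬ OnCap C j ∧
    ∀ k, i < k → k < j → Triv (d k) ∨ OnCap C k

/-- One step of the cap construction: join a neighbouring `∨∧` pair by a cap. -/
def AddCap (d : ℤ → Lbl) (C C' : Set (ℤ × ℤ)) : Prop :=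
  ∃ i j, ValidPair d C i j ∧ C' = insert (i, j) C

/-- `C` is reachable from the empty configuration by cap-adding steps. -/
def Reachable (d : ℤ → Lbl) (C : Set (ℤ × ℤ)) : Prop :=
  Relation.ReflTransGen (AddCap d) ∅ C

/-- No neighbouring `∨∧` pair remains. -/
def Complete (d : ℤ → Lbl) (C : Set (ℤ × ℤ)) : Prop :=
  ¬ ∃ i j, ValidPair d C i j

/-- `C` is the (completed) cap diagram of `d`. -/
def IsCapDiagram (d : ℤ → Lbl) (C : Set (ℤ × ℤ)) : Prop :=
  Reachable d C ∧ Complete d C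

/-- The labelled cap diagram `c x` is oriented, where `c` is the cap diagram
(caps `C`, rays at the uncapped nontrivial vertices of the underlying weight
`d`) and `x` is a weight diagram: free vertices of `c` are labelled `∘` or `×`
in `x`; each cap carries exactly one `∨` and one `∧`; each ray vertex carries
`∨` or `∧`; and no two rays are labelled `∨` then `∧` from left to right. -/
def Oriented (d : ℤ → Lbl) (C : Set (ℤ × ℤ)) (x : ℤ → Lbl) : Prop :=
  (∀ n, ¬ OnCap C n → Triv (d n) → Triv (x n)) ∧
  (∀ p ∈ C, (x p.1 = Lbl.vee ∧ x p.2 = Lbl.wedge) ∨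
            (x p.1 = Lbl.wedge ∧ x p.2 = Lbl.vee)) ∧
  (∀ n, ¬ OnCap C n → ¬ Triv (d n) → (x n = Lbl.vee ∨ x n = Lbl.wedge)) ∧
  (∀ m n : ℤ, m < n → ¬ OnCap C m → ¬ OnCap C n → ¬ Triv (d m) → ¬ Triv (d n) →
    ¬ (x m = Lbl.vee ∧ x n = Lbl.wedge))

/-- The number of clockwise caps (labelled `∧` then `∨`) of the labelled cap
diagram: its degree. -/
noncomputable def clockCount (C : Set (ℤ × ℤ)) (x : ℤ → Lbl) : ℕ :=
  {p ∈ C | x p.1 = Lbl.wedge ∧ x p.2 = Lbl.vee}.ncard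

/-- Two weight diagrams lie in the same block (`W`-orbit): they agree on
trivial labels, differ in finitely many places, and are obtained from each
other by permuting a finite number of `∧`s and `∨`s pairwise. -/
def SameBlock (d d' : ℤ → Lbl) : Prop :=
  (∀ n, Triv (d n) → d' n = d n) ∧ (∀ n, Triv (d' n) → d n = d' n) ∧
  {n | d n ≠ d' n}.Finite ∧
  {n | d n = Lbl.wedge ∧ d' n = Lbl.vee}.ncard
    = {n | d n = Lbl.vee ∧ d' n = Lbl.wedge}.ncard


/-! ### Auxiliary development: uniqueness of completed cap diagrams -/

open Relation

lemma triv_not_vee : ¬ Triv Lbl.vee := by simp [Triv]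

lemma triv_not_wedge : ¬ Triv Lbl.wedge := by simp [Triv]

lemma onCap_mono {C C' : Set (ℤ × ℤ)} (h : C ⊆ C') {n : ℤ} (hn : OnCap C n) : OnCap C' n := by
  obtain ⟨p, hp, hpe⟩ := hn; exact ⟨p, h hp, hpe⟩

lemma valid_disjoint {d : ℤ → Lbl} {C : Set (ℤ × ℤ)} {a b a' b' : ℤ}
    (h : ValidPair d C a b) (h' : ValidPair d C a' b') (hne : (a, b) ≠ (a', b')) :
    a' ≠ a ∧ a' ≠ b ∧ b' ≠ a ∧ b' ≠ b := by
  obtain ⟨hab, ha, hb, hna, hnb, hbet⟩ := h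
  obtain ⟨hab', ha', hb', hna', hnb', hbet'⟩ := h'
  refine ⟨?_, ?_, ?_, ?_⟩
  · rintro rfl
    have hbb : b ≠ b' := by rintro rfl; exact hne rfl
    rcases lt_or_gt_of_ne hbb with h1 | h1
    · rcases hbet' b hab h1 with ht | hc
      · rw [hb] at ht; exact triv_not_wedge ht
      · exact hnb hc
    · rcases hbet b' hab' h1 with ht | hc
      · rw [hb'] at ht; exact triv_not_wedge ht
      · exact hnb' hc
  · rintro rfl; exact Lbl.noConfusion (ha'.symm.trans hb)
  · rintro rfl; exact Lbl.noConfusion (hb'.symm.trans ha)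
  · rintro rfl
    have haa : a ≠ a' := by rintro rfl; exact hne rfl
    rcases lt_or_gt_of_ne haa with h1 | h1
    · rcases hbet a' h1 hab' with ht | hc
      · rw [ha'] at ht; exact triv_not_vee ht
      · exact hna' hc
    · rcases hbet' a h1 hab with ht | hc
      · rw [ha] at ht; exact triv_not_vee ht
      · exact hna hc

lemma valid_insert {d : ℤ → Lbl} {C : Set (ℤ × ℤ)} {a b a' b' : ℤ}
    (h : ValidPair d C a b) (h1 : a' ≠ a) (h2 : a' ≠ b) (h3 : b' ≠ a) (h4 : b' ≠ b) :
    ValidPair d (insert (a', b') C) a b := by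
  obtain ⟨hab, ha, hb, hna, hnb, hbet⟩ := h
  refine ⟨hab, ha, hb, ?_, ?_,
    fun n hn1 hn2 => (hbet n hn1 hn2).imp id (onCap_mono (Set.subset_insert _ _))⟩
  · rintro ⟨p, hp, hpe⟩
    rcases Set.mem_insert_iff.1 hp with rfl | hp
    · rcases hpe with hh | hh
      · exact h1 hh
      · exact h3 hh
    · exact hna ⟨p, hp, hpe⟩
  · rintro ⟨p, hp, hpe⟩
    rcases Set.mem_insert_iff.1 hp with rfl | hp
    · rcases hpe with hh | hh
      · exact h2 hh
      · exact h4 hh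
    · exact hnb ⟨p, hp, hpe⟩

lemma persist {d : ℤ → Lbl} {C C₁ : Set (ℤ × ℤ)} {a b : ℤ}
    (h : ValidPair d C a b) (hstep : AddCap d C C₁) :
    (a, b) ∈ C₁ ∨ ValidPair d C₁ a b := by
  obtain ⟨a', b', hv, rfl⟩ := hstep
  by_cases hp : (a, b) = (a', b')
  · left; rw [hp]; exact Set.mem_insert _ _
  · right
    obtain ⟨n1, n2, n3, n4⟩ := valid_disjoint h hv hp
    exact valid_insert h n1 n2 n3 n4

lemma persist_star {d : ℤ → Lbl} {C D : Set (ℤ × ℤ)} {a b : ℤ}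
    (h : ValidPair d C a b) (hr : ReflTransGen (AddCap d) C D) :
    (a, b) ∈ D ∨ ValidPair d D a b := by
  induction hr with
  | refl => exact .inr h
  | tail hCE hstep ih =>
    rcases ih with hm | hv
    · obtain ⟨x, y, _, rfl⟩ := hstep
      exact .inl (Set.mem_insert_of_mem _ hm)
    · exact persist hv hstep

lemma complete_no_ext {d : ℤ → Lbl} {C D : Set (ℤ × ℤ)}
    (hc : Complete d C) (h : ReflTransGen (AddCap d) C D) : D = C := by
  rcases h.cases_head with h | ⟨E, hstep, _⟩
  · exact h.symm
  · obtain ⟨x, y, hv, _⟩ := hstep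
    exact absurd ⟨x, y, hv⟩ hc

lemma reorder {d : ℤ → Lbl} {D : Set (ℤ × ℤ)} {a b : ℤ} (hmem : (a, b) ∈ D) :
    ∀ {C : Set (ℤ × ℤ)}, ReflTransGen (AddCap d) C D → ValidPair d C a b →
      ReflTransGen (AddCap d) (insert (a, b) C) D := by
  intro C h
  induction h using ReflTransGen.head_induction_on with
  | refl =>
    intro hv
    exact absurd ⟨(a, b), hmem, Or.inl rfl⟩ hv.2.2.2.1
  | head hstep hrest ih =>
    intro hv
    obtain ⟨a', b', hv', rfl⟩ := hstep
    by_cases hp : (a', b') = (a, b)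
    · rw [hp] at hrest; exact hrest
    · obtain ⟨n1, n2, n3, n4⟩ := valid_disjoint hv hv' (fun hh => hp hh.symm)
      exact ReflTransGen.head
        ⟨a', b', valid_insert hv' n1.symm n3.symm n2.symm n4.symm,
          (Set.insert_comm _ _ _)⟩
        (ih (valid_insert hv n1 n2 n3 n4))

lemma unique_aux {d : ℤ → Lbl} {C : Set (ℤ × ℤ)} (hc : Complete d C) :
    ∀ {C₀ : Set (ℤ × ℤ)}, ReflTransGen (AddCap d) C₀ C →
      ∀ {D : Set (ℤ × ℤ)}, ReflTransGen (AddCap d) C₀ D → Complete d D → C = D := by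
  intro C₀ h
  induction h using ReflTransGen.head_induction_on with
  | refl =>
    intro D hD _
    exact (complete_no_ext hc hD).symm
  | head hstep hrest ih =>
    intro D hD hDc
    obtain ⟨a, b, hv, rfl⟩ := hstep
    have hmem : (a, b) ∈ D := by
      rcases persist_star hv hD with h | h
      · exact h
      · exact absurd ⟨a, b, h⟩ hDc
    exact ih (reorder hmem hD hv) hDc

lemma capDiagram_unique {d : ℤ → Lbl} {C D : Set (ℤ × ℤ)}
    (h1 : IsCapDiagram d C) (h2 : IsCapDiagram d D) : C = D :=
  unique_aux h1.2 h1.1 h2.1 h2.2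


/-! ### Transport along the adjacent transposition `swap (i-1) i` -/

/-- Image of a cap configuration under the transposition `swap (i-1) i`
applied to both endpoints. -/
def pmap (i : ℤ) (C : Set (ℤ × ℤ)) : Set (ℤ × ℤ) :=
  (fun p : ℤ × ℤ => (Equiv.swap (i-1) i p.1, Equiv.swap (i-1) i p.2)) '' C

lemma pmap_pmap (i : ℤ) (C : Set (ℤ × ℤ)) : pmap i (pmap i C) = C := by
  ext p
  simp only [pmap, Set.mem_image]
  constructor
  · rintro ⟨q, ⟨r, hr, rfl⟩, rfl⟩
    simpa [Equiv.swap_apply_self] using hr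
  · intro hp
    exact ⟨(Equiv.swap (i-1) i p.1, Equiv.swap (i-1) i p.2), ⟨p, hp, rfl⟩,
      by simp [Equiv.swap_apply_self]⟩

lemma onCap_pmap (i : ℤ) (C : Set (ℤ × ℤ)) (n : ℤ) :
    OnCap (pmap i C) n ↔ OnCap C (Equiv.swap (i-1) i n) := by
  constructor
  · rintro ⟨p, ⟨q, hq, rfl⟩, h⟩
    refine ⟨q, hq, ?_⟩
    rcases h with h | h
    · left; rw [← h, Equiv.swap_apply_self]
    · right; rw [← h, Equiv.swap_apply_self]
  · rintro ⟨q, hq, h⟩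
    refine ⟨(Equiv.swap (i-1) i q.1, Equiv.swap (i-1) i q.2), ⟨q, hq, rfl⟩, ?_⟩
    rcases h with h | h
    · left; rw [h, Equiv.swap_apply_self]
    · right; rw [h, Equiv.swap_apply_self]

lemma swap_lt_or {i m n : ℤ} (h : m < n) :
    Equiv.swap (i-1) i m < Equiv.swap (i-1) i n ∨ (m = i-1 ∧ n = i) := by
  simp only [Equiv.swap_apply_def]
  split_ifs <;> omega

lemma swap_eq_self_of_ne {i n : ℤ} (h1 : n ≠ i-1) (h2 : n ≠ i) :
    Equiv.swap (i-1) i n = n :=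
  Equiv.swap_apply_of_ne_of_ne h1 h2

lemma eq_swap {i n : ℤ} : n = Equiv.swap (i-1) i (Equiv.swap (i-1) i n) :=
  (Equiv.swap_apply_self _ _ _).symm

lemma valid_pmap {i : ℤ} {δ : ℤ → Lbl} (htriv : Triv (δ (i-1)) ∨ Triv (δ i))
    {C : Set (ℤ × ℤ)} {a b : ℤ} (h : ValidPair δ C a b) :
    ValidPair (fun n => δ (Equiv.swap (i-1) i n)) (pmap i C)
      (Equiv.swap (i-1) i a) (Equiv.swap (i-1) i b) := by
  obtain ⟨hab, ha, hb, hna, hnb, hbet⟩ := h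
  have hnotpair : ¬ (a = i-1 ∧ b = i) := by
    rintro ⟨rfl, rfl⟩
    rcases htriv with ht | ht
    · rw [ha] at ht; exact triv_not_vee ht
    · rw [hb] at ht; exact triv_not_wedge ht
  have horder : Equiv.swap (i-1) i a < Equiv.swap (i-1) i b := by
    rcases swap_lt_or (i := i) hab with h | h
    · exact h
    · exact absurd h hnotpair
  refine ⟨horder, ?_, ?_, ?_, ?_, ?_⟩
  · show δ (Equiv.swap (i-1) i (Equiv.swap (i-1) i a)) = Lbl.vee
    rw [Equiv.swap_apply_self]; exact ha
  · show δ (Equiv.swap (i-1) i (Equiv.swap (i-1) i b)) = Lbl.wedge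
    rw [Equiv.swap_apply_self]; exact hb
  · rw [onCap_pmap, Equiv.swap_apply_self]; exact hna
  · rw [onCap_pmap, Equiv.swap_apply_self]; exact hnb
  · intro m hm1 hm2
    rw [onCap_pmap]
    show Triv (δ (Equiv.swap (i-1) i m)) ∨ OnCap C (Equiv.swap (i-1) i m)
    rcases eq_or_ne m (i-1) with rfl | hk1
    · -- m = i-1, swap m = i
      rw [Equiv.swap_apply_left]
      by_cases ht : Triv (δ i)
      · exact .inl ht
      · have ht' : Triv (δ (i-1)) := htriv.resolve_right ht
        have ha' : a < i := by
          have h1 : Equiv.swap (i-1) i a ≠ i - 1 := ne_of_lt hm1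
          have h2 : Equiv.swap (i-1) i a ≠ i := by omega
          have heq : a = Equiv.swap (i-1) i a := by
            conv_lhs => rw [eq_swap (i := i) (n := a)]
            rw [swap_eq_self_of_ne h1 h2]
          omega
        have hb' : i < b := by
          have hbne : b ≠ i - 1 := by
            intro hh; rw [hh] at hb; rw [hb] at ht'; exact triv_not_wedge ht'
          have h2 : Equiv.swap (i-1) i b ≠ i := by
            intro hh
            have : b = i - 1 := by
              rw [eq_swap (i := i) (n := b), hh, Equiv.swap_apply_right]
            exact hbne this
          have h3 : Equiv.swap (i-1) i b ≠ i - 1 := by omega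
          have heq : b = Equiv.swap (i-1) i b := by
            conv_lhs => rw [eq_swap (i := i) (n := b)]
            rw [swap_eq_self_of_ne h3 h2]
          omega
        exact hbet i ha' hb'
    · rcases eq_or_ne m i with heq2 | hk2
      · -- m = i, swap m = i-1
        rw [heq2] at hm1 hm2 ⊢
        rw [Equiv.swap_apply_right]
        by_cases ht : Triv (δ (i-1))
        · exact .inl ht
        · have ht' : Triv (δ i) := htriv.resolve_left ht
          have hb' : i - 1 < b := by
            have h2 : i < Equiv.swap (i-1) i b := hm2
            have h3 : Equiv.swap (i-1) i b ≠ i - 1 := by omega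
            have h4 : Equiv.swap (i-1) i b ≠ i := by omega
            have heq : b = Equiv.swap (i-1) i b := by
              conv_lhs => rw [eq_swap (i := i) (n := b)]
              rw [swap_eq_self_of_ne h3 h4]
            omega
          have ha' : a < i - 1 := by
            rcases eq_or_ne (Equiv.swap (i-1) i a) (i-1) with hh | hh
            · exfalso
              have haa : a = i := by
                rw [eq_swap (i := i) (n := a), hh, Equiv.swap_apply_left]
              rw [haa] at ha; rw [ha] at ht'; exact triv_not_vee ht'
            · have h4 : Equiv.swap (i-1) i a ≠ i := ne_of_lt hm1
              have heq : a = Equiv.swap (i-1) i a := by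
                conv_lhs => rw [eq_swap (i := i) (n := a)]
                rw [swap_eq_self_of_ne hh h4]
              have hlt : Equiv.swap (i-1) i a < i := hm1
              omega
          exact hbet (i-1) ha' hb'
      · -- m ∉ {i-1, i}
        rw [swap_eq_self_of_ne hk1 hk2]
        apply hbet m
        · rcases eq_or_ne a (i-1) with rfl | ha1
          · rw [Equiv.swap_apply_left] at hm1; omega
          · rcases eq_or_ne a i with rfl | ha2
            · rw [Equiv.swap_apply_right] at hm1; omega
            · rw [swap_eq_self_of_ne ha1 ha2] at hm1; exact hm1
        · rcases eq_or_ne b (i-1) with rfl | hb1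
          · rw [Equiv.swap_apply_left] at hm2; omega
          · rcases eq_or_ne b i with rfl | hb2
            · rw [Equiv.swap_apply_right] at hm2; omega
            · rw [swap_eq_self_of_ne hb1 hb2] at hm2; exact hm2


lemma addCap_pmap {i : ℤ} {δ : ℤ → Lbl} (htriv : Triv (δ (i-1)) ∨ Triv (δ i))
    {C C₂ : Set (ℤ × ℤ)} (h : AddCap δ C C₂) :
    AddCap (fun n => δ (Equiv.swap (i-1) i n)) (pmap i C) (pmap i C₂) := by
  obtain ⟨a, b, hv, rfl⟩ := h
  exact ⟨Equiv.swap (i-1) i a, Equiv.swap (i-1) i b, valid_pmap htriv hv,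
    by simp [pmap, Set.image_insert_eq]⟩

lemma reach_pmap {i : ℤ} {δ : ℤ → Lbl} (htriv : Triv (δ (i-1)) ∨ Triv (δ i))
    {C : Set (ℤ × ℤ)} (h : Reachable δ C) :
    Reachable (fun n => δ (Equiv.swap (i-1) i n)) (pmap i C) := by
  unfold Reachable at h ⊢
  induction h with
  | refl =>
    have : pmap i (∅ : Set (ℤ × ℤ)) = ∅ := by simp [pmap]
    rw [this]
  | tail _ hstep ih => exact ih.tail (addCap_pmap htriv hstep)

lemma complete_pmap {i : ℤ} {δ : ℤ → Lbl} (htriv : Triv (δ (i-1)) ∨ Triv (δ i))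
    {C : Set (ℤ × ℤ)} (h : Complete δ C) :
    Complete (fun n => δ (Equiv.swap (i-1) i n)) (pmap i C) := by
  rintro ⟨a, b, hv⟩
  have htriv' : Triv ((fun n => δ (Equiv.swap (i-1) i n)) (i-1)) ∨
      Triv ((fun n => δ (Equiv.swap (i-1) i n)) i) := by
    simpa [Equiv.swap_apply_left, Equiv.swap_apply_right] using htriv.symm
  have := valid_pmap (δ := fun n => δ (Equiv.swap (i-1) i n)) htriv' hv
  rw [pmap_pmap] at this
  simp only [Equiv.swap_apply_self] at this
  exact h ⟨_, _, this⟩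

lemma oriented_pmap {i : ℤ} {δ : ℤ → Lbl} (htriv : Triv (δ (i-1)) ∨ Triv (δ i))
    {C : Set (ℤ × ℤ)} {x : ℤ → Lbl} (h : Oriented δ C x) :
    Oriented (fun n => δ (Equiv.swap (i-1) i n)) (pmap i C)
      (fun n => x (Equiv.swap (i-1) i n)) := by
  obtain ⟨h1, h2, h3, h4⟩ := h
  refine ⟨?_, ?_, ?_, ?_⟩
  · intro n hn ht
    rw [onCap_pmap] at hn
    exact h1 _ hn ht
  · rintro p ⟨q, hq, rfl⟩
    have := h2 q hq
    simpa [Equiv.swap_apply_self] using this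
  · intro n hn ht
    rw [onCap_pmap] at hn
    exact h3 _ hn ht
  · intro m n hmn hcm hcn htm htn
    rw [onCap_pmap] at hcm hcn
    rcases swap_lt_or (i := i) hmn with hlt | ⟨hm, hn⟩
    · exact h4 _ _ hlt hcm hcn htm htn
    · intro _
      rw [hm] at htm; rw [hn] at htn
      simp only [Equiv.swap_apply_left, Equiv.swap_apply_right] at htm htn
      rcases htriv with ht | ht
      · exact htn ht
      · exact htm ht

lemma clock_pmap (i : ℤ) (C : Set (ℤ × ℤ)) (x : ℤ → Lbl) :
    clockCount (pmap i C) (fun n => x (Equiv.swap (i-1) i n)) = clockCount C x := by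
  unfold clockCount
  have himg : {p ∈ pmap i C | (fun n => x (Equiv.swap (i-1) i n)) p.1 = Lbl.wedge ∧
        (fun n => x (Equiv.swap (i-1) i n)) p.2 = Lbl.vee}
      = (fun p : ℤ × ℤ => (Equiv.swap (i-1) i p.1, Equiv.swap (i-1) i p.2)) ''
        {p ∈ C | x p.1 = Lbl.wedge ∧ x p.2 = Lbl.vee} := by
    ext p
    constructor
    · rintro ⟨⟨q, hq, rfl⟩, hp1, hp2⟩
      simp only [Equiv.swap_apply_self] at hp1 hp2
      exact ⟨q, ⟨hq, hp1, hp2⟩, rfl⟩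
    · rintro ⟨q, ⟨hq, hq1, hq2⟩, rfl⟩
      refine ⟨⟨q, hq, rfl⟩, ?_, ?_⟩
      · simpa [Equiv.swap_apply_self] using hq1
      · simpa [Equiv.swap_apply_self] using hq2
  rw [himg, Set.ncard_image_of_injective]
  intro p q hpq
  have h1 := congrArg Prod.fst hpq
  have h2 := congrArg Prod.snd hpq
  simp only at h1 h2
  have e1 := (Equiv.swap (i-1) i).injective h1
  have e2 := (Equiv.swap (i-1) i).injective h2
  exact Prod.ext e1 e2

/-- Translation invariance of `d` (Case (i)): suppose the diagram `d` of
`x_λ` has a small cap `(k, i)` (only `∘`/`×` strictly inside) whose right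
vertex `i` is labelled `∧`, with label `∘` at `i − 1`, and let `d'` (the
diagram of `x_{λ'}`) be obtained by replacing the labels `(∘, ∧)` at
`(i − 1, i)` by `(∧, ∘)`.  Then under the induced bijection `μ ↦ μ'` of the
blocks (swapping the labels at `i − 1` and `i`), one has
`d_{λ'μ'}(q) = d_{λμ}(q)`: orientedness is preserved and the degrees agree. -/
theorem dPoly_translation_invariance (d d' : ℤ → Lbl) (hd : Bdd d)
    (C C' : Set (ℤ × ℤ)) (hC : IsCapDiagram d C) (hC' : IsCapDiagram d' C')
    (k i : ℤ) (hcap : (k, i) ∈ C) (hsmall : ∀ m, k < m → m < i → Triv (d m))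
    (hlab : d (i - 1) = Lbl.circ ∧ d i = Lbl.wedge)
    (hd' : d' (i - 1) = Lbl.wedge ∧ d' i = Lbl.circ ∧
      ∀ n, n ≠ i - 1 → n ≠ i → d' n = d n)
    (dmu dmu' : ℤ → Lbl) (hmu : SameBlock d dmu)
    (hmu' : dmu' (i - 1) = dmu i ∧ dmu' i = dmu (i - 1) ∧
      ∀ n, n ≠ i - 1 → n ≠ i → dmu' n = dmu n) :
    (Oriented d' C' dmu' ↔ Oriented d C dmu) ∧
    clockCount C' dmu' = clockCount C dmu := by
  obtain ⟨hl1, hl2⟩ := hlab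
  obtain ⟨hd1, hd2, hd3⟩ := hd'
  obtain ⟨hm1, hm2, hm3⟩ := hmu'
  have htriv : Triv (d (i-1)) ∨ Triv (d i) := Or.inl (Or.inl hl1)
  have htriv' : Triv (d' (i-1)) ∨ Triv (d' i) := Or.inr (Or.inl hd2)
  have hde2 : (fun n => d (Equiv.swap (i-1) i n)) = d' := by
    funext n
    rcases eq_or_ne n (i-1) with rfl | h1
    · rw [Equiv.swap_apply_left, hd1, hl2]
    rcases eq_or_ne n i with heq | h2
    · rw [heq, Equiv.swap_apply_right, hd2, hl1]
    · rw [swap_eq_self_of_ne h1 h2, hd3 n h1 h2]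
  have hme2 : (fun n => dmu (Equiv.swap (i-1) i n)) = dmu' := by
    funext n
    rcases eq_or_ne n (i-1) with rfl | h1
    · rw [Equiv.swap_apply_left, hm1]
    rcases eq_or_ne n i with heq | h2
    · rw [heq, Equiv.swap_apply_right, hm2]
    · rw [swap_eq_self_of_ne h1 h2, hm3 n h1 h2]
  have hde : (fun n => d' (Equiv.swap (i-1) i n)) = d :=
    funext fun n =>
      (congrFun hde2 (Equiv.swap (i-1) i n)).symm.trans
        (by rw [Equiv.swap_apply_self])
  have hme : (fun n => dmu' (Equiv.swap (i-1) i n)) = dmu :=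
    funext fun n =>
      (congrFun hme2 (Equiv.swap (i-1) i n)).symm.trans
        (by rw [Equiv.swap_apply_self])
  have hCd : IsCapDiagram d (pmap i C') := by
    constructor
    · have := reach_pmap htriv' hC'.1
      rwa [hde] at this
    · have := complete_pmap htriv' hC'.2
      rwa [hde] at this
  have hCC : C = pmap i C' := capDiagram_unique hC hCd
  have hC'eq : C' = pmap i C := by rw [hCC, pmap_pmap]
  refine ⟨⟨?_, ?_⟩, ?_⟩
  · intro hor'
    have := oriented_pmap htriv' hor'
    rwa [hde, ← hCC, hme] at this
  · intro hor
    have := oriented_pmap htriv hor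
    rwa [hde2, ← hC'eq, hme2] at this
  · rw [hC'eq, ← hme2, clock_pmap]
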